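/- The map g is Li–Yorke sensitive: there exists δ > 0 such that for every point x ∈ [−1,1] and every open neighborhood V of x there is a point y ∈ V with liminf_{n→∞} |gⁿ(x) − gⁿ(y)| = 0 and limsup_{n→∞} |gⁿ(x) − gⁿ(y)| ≥ δ. -/

import Mathlib

open Filter

/-- The map `g : [-1,1] → [-1,1]` given by `g(x) = 2x + 2` on `[-1,-1/2]`,
`g(x) = -2x` on `[-1/2,0]`, and `g(x) = -x` on `[0,1]`. -/
noncomputable def gMap (x : ℝ) : ℝ :=
  if x ≤ -(1 / 2) then 2 * x + 2 else if x ≤ 0 then -2 * x else -x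

/-!
On `[0, 1]` the square of `g` is the tent map `T`, and `g` maps `[-1, 0]` onto `[0, 1]` by
`w ↦ T (-w)`, so it suffices to find Li–Yorke partners for `T`. The tent map is a factor of the
doubling map, hence `T^[n+1]` maps every interval of length at least `2⁻ⁿ` onto `[0, 1]`. For
such a locally eventually onto map, the points `y` whose orbit comes arbitrarily close to that
of `x`, and also more than `1/4` away from it, infinitely often form a countable intersection of
dense open sets, which is dense by Baire's theorem.
-/

open Set

section LiYorke

variable {X : Type*}

theorem eventually_residual_frequently_mem [TopologicalSpace X] {s : ℕ → Set X}
    (hs : ∀ n, IsOpen (s n))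
    (hdense : ∀ U : Set X, IsOpen U → U.Nonempty → ∃ᶠ n in atTop, (U ∩ s n).Nonempty) :
    ∀ᶠ y in residual X, ∃ᶠ n in atTop, y ∈ s n := by
  simp only [frequently_atTop]
  refine eventually_countable_forall.2 fun M => ?_
  have hd : Dense (⋃ n ≥ M, s n) := dense_iff_inter_open.2 fun U hU hne => by
    obtain ⟨n, hn, y, hyU, hy⟩ := frequently_atTop.1 (hdense U hU hne) M
    exact ⟨y, hyU, mem_biUnion hn hy⟩
  filter_upwards [residual_of_dense_open (isOpen_biUnion fun n _ => hs n) hd] with y hy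
  obtain ⟨n, hn, hy⟩ := mem_iUnion₂.1 hy
  exact ⟨n, hn, hy⟩

variable [PseudoMetricSpace X]

def IsLiYorkePair (f : X → X) (δ : ℝ) (x y : X) : Prop :=
  (∀ ε > 0, ∃ᶠ n in atTop, dist (f^[n] x) (f^[n] y) < ε) ∧
    ∃ᶠ n in atTop, δ < dist (f^[n] x) (f^[n] y)

theorem IsLiYorkePair.of_dist_comp {Y : Type*} [PseudoMetricSpace Y] {f : X → X} {g : Y → Y}
    {δ : ℝ} {x y : X} {x' y' : Y} (h : IsLiYorkePair f δ x y) {φ : ℕ → ℕ}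
    (hφ : Tendsto φ atTop atTop)
    (hd : ∀ᶠ m in atTop, dist (g^[φ m] x') (g^[φ m] y') = dist (f^[m] x) (f^[m] y)) :
    IsLiYorkePair g δ x' y' :=
  ⟨fun ε hε => hφ.frequently <| ((h.1 ε hε).and_eventually hd).mono fun _ h => h.2 ▸ h.1,
    hφ.frequently <| (h.2.and_eventually hd).mono fun _ h => h.2 ▸ h.1⟩

theorem IsLiYorkePair.apply {f : X → X} {δ : ℝ} {x y : X} (h : IsLiYorkePair f δ x y) :
    IsLiYorkePair f δ (f x) (f y) :=
  h.of_dist_comp (tendsto_sub_atTop_nat 1) <| (eventually_ge_atTop 1).mono fun m hm => by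
    rw [← Function.iterate_succ_apply, ← Function.iterate_succ_apply, Nat.succ_eq_add_one,
      Nat.sub_add_cancel hm]

theorem IsLiYorkePair.liminf_dist_eq_zero {f : X → X} {δ : ℝ} {x y : X}
    (h : IsLiYorkePair f δ x y) : liminf (fun n => dist (f^[n] x) (f^[n] y)) atTop = 0 := by
  have hbdd : IsBoundedUnder (· ≥ ·) atTop fun n => dist (f^[n] x) (f^[n] y) :=
    isBoundedUnder_of ⟨0, fun _ => dist_nonneg⟩
  refine le_antisymm (le_of_forall_pos_le_add fun ε hε => ?_) ?_
  · rw [zero_add]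
    exact liminf_le_of_frequently_le ((h.1 ε hε).mono fun _ => le_of_lt) hbdd
  · refine le_liminf_of_le ⟨1, fun a ha => ?_⟩ (Eventually.of_forall fun _ => dist_nonneg)
    obtain ⟨n, hn, ha⟩ := ((h.1 1 one_pos).and_eventually ha).exists
    exact ha.trans hn.le

theorem IsLiYorkePair.le_limsup_dist {f : X → X} {δ : ℝ} {x y : X} (h : IsLiYorkePair f δ x y)
    (hbdd : IsBoundedUnder (· ≤ ·) atTop fun n => dist (f^[n] x) (f^[n] y)) :
    δ ≤ limsup (fun n => dist (f^[n] x) (f^[n] y)) atTop :=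
  le_limsup_of_frequently_le (h.2.mono fun _ => le_of_lt) hbdd

theorem Set.MapsTo.isLiYorkePair_restrict_iff {f : X → X} {s : Set X} (h : MapsTo f s s) {δ : ℝ}
    {x y : s} : IsLiYorkePair (h.restrict f s s) δ x y ↔ IsLiYorkePair f δ x y := by
  simp only [IsLiYorkePair, h.iterate_restrict, Subtype.dist_eq, MapsTo.val_restrict_apply]

theorem exists_isLiYorkePair_of_eventually_surjOn [BaireSpace X] {f : X → X} (hf : Continuous f)
    (hleo : ∀ W : Set X, IsOpen W → W.Nonempty → ∀ᶠ n in atTop, SurjOn f^[n] W univ)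
    {δ : ℝ} (hδ : ∀ z : X, ∃ w, δ < dist z w) (x : X) {V : Set X} (hV : IsOpen V)
    (hne : V.Nonempty) : ∃ y ∈ V, IsLiYorkePair f δ x y := by
  have hcont : ∀ n, Continuous fun y => dist (f^[n] x) (f^[n] y) :=
    fun n => continuous_const.dist (hf.iterate n)
  have hsync : ∀ k : ℕ, ∀ᶠ y in residual X,
      ∃ᶠ n in atTop, y ∈ {y | dist (f^[n] x) (f^[n] y) < 1 / (k + 1)} := fun k =>
    eventually_residual_frequently_mem (fun n => isOpen_lt (hcont n) continuous_const)
      fun W hW hWne => ((hleo W hW hWne).mono fun n hn => by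
        obtain ⟨y, hyW, hy⟩ := hn (mem_univ (f^[n] x))
        exact ⟨y, hyW, by simp only [mem_ofPred_eq, hy, dist_self]; positivity⟩).frequently
  have hsep : ∀ᶠ y in residual X, ∃ᶠ n in atTop, y ∈ {y | δ < dist (f^[n] x) (f^[n] y)} :=
    eventually_residual_frequently_mem (fun n => isOpen_lt continuous_const (hcont n))
      fun W hW hWne => ((hleo W hW hWne).mono fun n hn => by
        obtain ⟨w, hw⟩ := hδ (f^[n] x)
        obtain ⟨y, hyW, hy⟩ := hn (mem_univ w)
        exact ⟨y, hyW, by simpa only [mem_ofPred_eq, hy] using hw⟩).frequently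
  obtain ⟨y, hyV, hysync, hysep⟩ := (dense_of_mem_residual
    ((eventually_countable_forall.2 hsync).and hsep)).inter_open_nonempty V hV hne
  refine ⟨y, hyV, fun ε hε => ?_, hysep⟩
  obtain ⟨k, hk⟩ := exists_nat_one_div_lt hε
  exact (hysync k).mono fun n hn => hn.trans hk

end LiYorke

noncomputable def tent (x : ℝ) : ℝ := min (2 * x) (2 - 2 * x)

theorem tent_of_le_half {x : ℝ} (h : x ≤ 1 / 2) : tent x = 2 * x := min_eq_left (by linarith)

theorem tent_of_half_le {x : ℝ} (h : 1 / 2 ≤ x) : tent x = 2 - 2 * x := min_eq_right (by linarith)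

theorem tent_one_sub (x : ℝ) : tent (1 - x) = tent x := by
  rw [tent, tent, min_comm]; ring_nf

theorem continuous_tent : Continuous tent := by unfold tent; fun_prop

theorem mapsTo_tent : MapsTo tent (Icc 0 1) (Icc 0 1) := fun x ⟨h0, h1⟩ => by
  rcases le_total x (1 / 2) with h | h
  · rw [tent_of_le_half h]; constructor <;> linarith
  · rw [tent_of_half_le h]; constructor <;> linarith

-- `tent` is a semiconjugacy from the doubling map `t ↦ fract (2 * t)` to `tent` itself.
theorem tent_tent {t : ℝ} (ht : t ∈ Ico 0 1) : tent (tent t) = tent (Int.fract (2 * t)) := by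
  obtain ⟨h0, h1⟩ := ht
  rcases lt_or_ge t (1 / 2) with h | h
  · rw [tent_of_le_half h.le, Int.fract_eq_self.2 ⟨by linarith, by linarith⟩]
  · have hfract : Int.fract (2 * t) = 2 * t - 1 :=
      Int.fract_eq_iff.2 ⟨by linarith, by linarith, 1, by push_cast; ring⟩
    rw [tent_of_half_le h, hfract, ← tent_one_sub (2 * t - 1)]
    ring_nf

theorem tent_iterate_tent {t : ℝ} (ht : t ∈ Ico 0 1) (n : ℕ) :
    tent^[n] (tent t) = tent (Int.fract (2 ^ n * t)) := by
  induction n generalizing t with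
  | zero => rw [pow_zero, one_mul, Int.fract_eq_self.2 ht]; rfl
  | succ n ih =>
    rw [Function.iterate_succ_apply, tent_tent ht,
      ih ⟨Int.fract_nonneg _, Int.fract_lt_one _⟩]
    congr 1
    refine Int.fract_eq_fract.2 ⟨-(2 ^ n * ⌊2 * t⌋), ?_⟩
    rw [Int.fract]
    push_cast
    ring

theorem surjOn_tent_iterate_succ {a b : ℝ} {n : ℕ} (ha : 0 ≤ a) (hb : b ≤ 1)
    (hab : 1 ≤ 2 ^ n * (b - a)) : SurjOn tent^[n + 1] (Icc a b) (Icc 0 1) := by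
  intro v ⟨hv0, hv1⟩
  have hpos : (0 : ℝ) < 2 ^ n := by positivity
  set k : ℤ := ⌈2 ^ n * a - v / 2⌉
  have hk₁ : 2 ^ n * a ≤ v / 2 + k := by linarith [Int.le_ceil (2 ^ n * a - v / 2)]
  have hk₂ : v / 2 + k < 2 ^ n * b := by linarith [Int.ceil_lt_add_one (2 ^ n * a - v / 2)]
  have hlo : a ≤ (v / 2 + k) / 2 ^ n := (le_div_iff₀ hpos).2 (by linarith)
  have hhi : (v / 2 + k) / 2 ^ n < b := (div_lt_iff₀ hpos).2 (by linarith)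
  refine ⟨(v / 2 + k) / 2 ^ n, ⟨hlo, hhi.le⟩, ?_⟩
  rw [Function.iterate_succ_apply, tent_iterate_tent ⟨ha.trans hlo, hhi.trans_le hb⟩,
    mul_div_cancel₀ _ hpos.ne', Int.fract_add_intCast,
    Int.fract_eq_self.2 ⟨by linarith, by linarith⟩, tent_of_le_half (by linarith)]
  ring

theorem eventually_surjOn_tent_iterate {a b : ℝ} (ha : 0 ≤ a) (hab : a < b) (hb : b ≤ 1) :
    ∀ᶠ n in atTop, SurjOn tent^[n] (Icc a b) (Icc 0 1) := by
  obtain ⟨N, hN⟩ := eventually_atTop.1 <|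
    (tendsto_pow_atTop_atTop_of_one_lt one_lt_two).eventually_ge_atTop (1 / (b - a))
  filter_upwards [eventually_gt_atTop N] with n hn
  obtain ⟨m, rfl⟩ : ∃ m, n = m + 1 := ⟨n - 1, by omega⟩
  exact surjOn_tent_iterate_succ ha hb <|
    (div_le_iff₀ (sub_pos.2 hab)).1 (hN m (by omega))

theorem exists_Icc_subset_image_val {c d : ℝ} (hcd : c < d) {U : Set (Icc c d)} (hU : IsOpen U)
    (hne : U.Nonempty) : ∃ a b, c ≤ a ∧ a < b ∧ b ≤ d ∧ Icc a b ⊆ Subtype.val '' U := by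
  obtain ⟨⟨y, hyc, hyd⟩, hyU⟩ := hne
  obtain ⟨r, hr, hball⟩ := Metric.isOpen_iff.1 hU _ hyU
  refine ⟨max c (y - r / 2), min d (y + r / 2), le_max_left _ _,
    max_lt (lt_min hcd (by linarith)) (lt_min (by linarith) (by linarith)), min_le_left _ _, ?_⟩
  rintro t ⟨hta, htb⟩
  refine ⟨⟨t, (le_max_left _ _).trans hta, htb.trans (min_le_left _ _)⟩, hball ?_, rfl⟩
  rw [Metric.mem_ball, Subtype.dist_eq, Real.dist_eq, abs_lt]
  constructor <;> linarith [le_max_right c (y - r / 2), min_le_right d (y + r / 2)]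

theorem exists_isLiYorkePair_tent {x : ℝ} (hx : x ∈ Icc (0 : ℝ) 1) {U : Set ℝ} (hU : IsOpen U)
    (hxU : x ∈ U) : ∃ y ∈ Icc (0 : ℝ) 1, y ∈ U ∧ IsLiYorkePair tent (1 / 4) x y := by
  set T := mapsTo_tent.restrict tent (Icc (0 : ℝ) 1) (Icc 0 1)
  have hleo : ∀ W : Set (Icc (0 : ℝ) 1), IsOpen W → W.Nonempty →
      ∀ᶠ n in atTop, SurjOn T^[n] W univ := by
    intro W hW hne
    obtain ⟨a, b, ha, hab, hb, hsub⟩ := exists_Icc_subset_image_val zero_lt_one hW hne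
    filter_upwards [eventually_surjOn_tent_iterate ha hab hb] with n hn z _
    obtain ⟨t, ht, htz⟩ := hn z.2
    obtain ⟨w, hwW, rfl⟩ := hsub ht
    refine ⟨w, hwW, Subtype.ext ?_⟩
    rw [mapsTo_tent.iterate_restrict, MapsTo.val_restrict_apply, htz]
  have hδ : ∀ z : Icc (0 : ℝ) 1, ∃ w, 1 / 4 < dist z w := by
    rintro ⟨z, hz0, hz1⟩
    rcases le_total z (1 / 2) with h | h
    · refine ⟨⟨1, zero_le_one, le_rfl⟩, show 1 / 4 < |z - 1| from ?_⟩
      rw [abs_sub_comm, abs_of_nonneg (by linarith)]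
      linarith
    · refine ⟨⟨0, le_rfl, zero_le_one⟩, show 1 / 4 < |z - 0| from ?_⟩
      rw [sub_zero, abs_of_nonneg hz0]
      linarith
  obtain ⟨⟨y, hy⟩, hyU, hxy⟩ := exists_isLiYorkePair_of_eventually_surjOn
    (continuous_tent.restrict mapsTo_tent) hleo hδ ⟨x, hx⟩ (hU.preimage continuous_subtype_val)
    ⟨⟨x, hx⟩, hxU⟩
  exact ⟨y, hy, hyU, mapsTo_tent.isLiYorkePair_restrict_iff.1 hxy⟩

theorem gMap_of_nonneg {w : ℝ} (hw : 0 ≤ w) : gMap w = -w := by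
  unfold gMap
  split_ifs <;> linarith

theorem gMap_neg_of_nonneg {w : ℝ} (hw : 0 ≤ w) : gMap (-w) = tent w := by
  unfold gMap
  split_ifs
  · rw [tent_of_half_le (by linarith)]; ring
  · rw [tent_of_le_half (by linarith)]; ring
  · linarith

theorem mapsTo_gMap : MapsTo gMap (Icc (-1) 1) (Icc (-1) 1) := fun w ⟨h₁, h₂⟩ => by
  unfold gMap
  split_ifs <;> constructor <;> linarith

theorem gMap_iterate_two_mul {w : ℝ} (hw : w ∈ Icc (0 : ℝ) 1) (n : ℕ) :
    gMap^[2 * n] w = tent^[n] w := by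
  induction n with
  | zero => rfl
  | succ n ih =>
    rw [show 2 * (n + 1) = 2 * n + 1 + 1 by ring, Function.iterate_succ_apply',
      Function.iterate_succ_apply', ih, gMap_of_nonneg (mapsTo_tent.iterate n hw).1,
      gMap_neg_of_nonneg (mapsTo_tent.iterate n hw).1, Function.iterate_succ_apply']

theorem IsLiYorkePair.gMap_of_tent {δ x y : ℝ} (hx : x ∈ Icc (0 : ℝ) 1) (hy : y ∈ Icc (0 : ℝ) 1)
    (h : IsLiYorkePair tent δ x y) : IsLiYorkePair gMap δ x y :=
  h.of_dist_comp (tendsto_atTop_mono (fun n => Nat.le_mul_of_pos_left n two_pos) tendsto_id)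
    (Eventually.of_forall fun n => by rw [gMap_iterate_two_mul hx, gMap_iterate_two_mul hy])

theorem exists_isLiYorkePair_gMap {x : ℝ} (hx : x ∈ Icc (-1 : ℝ) 1) {U : Set ℝ} (hU : IsOpen U)
    (hxU : x ∈ U) : ∃ y ∈ Icc (-1 : ℝ) 1, y ∈ U ∧ IsLiYorkePair gMap (1 / 4) x y := by
  rcases le_total 0 x with hx0 | hx0
  · obtain ⟨y, hy, hyU, hxy⟩ := exists_isLiYorkePair_tent ⟨hx0, hx.2⟩ hU hxU
    exact ⟨y, ⟨by linarith [hy.1], hy.2⟩, hyU, hxy.gMap_of_tent ⟨hx0, hx.2⟩ hy⟩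
  · obtain ⟨y, hy, hyU, hxy⟩ :=
      exists_isLiYorkePair_tent ⟨neg_nonneg.2 hx0, by linarith [hx.1]⟩ hU.neg (by simpa using hxU)
    refine ⟨-y, ⟨by linarith [hy.2], by linarith [hy.1]⟩, hyU, ?_⟩
    simpa only [gMap_of_nonneg (neg_nonneg.2 hx0), gMap_of_nonneg hy.1, neg_neg] using
      (hxy.gMap_of_tent ⟨neg_nonneg.2 hx0, by linarith [hx.1]⟩ hy).apply

theorem gMap_liYorke_sensitive :
    ∃ δ : ℝ, 0 < δ ∧
      ∀ x ∈ Set.Icc (-1 : ℝ) 1, ∀ V : Set ℝ, V ⊆ Set.Icc (-1 : ℝ) 1 →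
        (∃ U : Set ℝ, IsOpen U ∧ V = Set.Icc (-1 : ℝ) 1 ∩ U) → x ∈ V →
        ∃ y ∈ V,
          liminf (fun n => |gMap^[n] x - gMap^[n] y|) atTop = 0 ∧
          δ ≤ limsup (fun n => |gMap^[n] x - gMap^[n] y|) atTop := by
  refine ⟨1 / 4, by norm_num, ?_⟩
  rintro x hx _ - ⟨U, hU, rfl⟩ ⟨-, hxU⟩
  obtain ⟨y, hy, hyU, hxy⟩ := exists_isLiYorkePair_gMap hx hU hxU
  have hbdd : IsBoundedUnder (· ≤ ·) atTop fun n => dist (gMap^[n] x) (gMap^[n] y) :=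
    isBoundedUnder_of ⟨2, fun n => by
      have hxn := mapsTo_gMap.iterate n hx
      have hyn := mapsTo_gMap.iterate n hy
      rw [Real.dist_eq, abs_le]
      constructor <;> linarith [hxn.1, hxn.2, hyn.1, hyn.2]⟩
  refine ⟨y, ⟨hy, hyU⟩, ?_, ?_⟩
  · simpa only [Real.dist_eq] using hxy.liminf_dist_eq_zero
  · simpa only [Real.dist_eq] using hxy.le_limsup_dist hbdd
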